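/- Under the regularity assumption, let q : Ω → ℝ₊ be a random variable, f : ℝ₊ → ℝⁿ₊ nondecreasing with f(q) integrable, and X = f(q). Define q_i* = inf{q' ≥ 0 : V_i(f(q')) ≥ 0} and assume the banks are ordered so that ∞ =: q_0* ≥ q_1* ≥ q_2* ≥ ... ≥ q_n* ≥ q_{n+1}* := 0, and that for every i ≤ n and q' ≥ 0, V_i(f(q')) < 0 if and only if q' < q_i*. Let Δ_0 = I, δ_0 = (I − Πᵀ)p̄, and for k ≥ 1 let Δ_k = Δ(z⁽ᵏ⁾) and δ_k = δ(z⁽ᵏ⁾) with z⁽ᵏ⁾ = e_1 + ... + e_k. Then for every bank i ≤ n: 𝔼[V_i(X)] = e_iᵀ Σ_{k=0}^n (Δ_k 𝔼[f(q)·1_{q ∈ [q_{k+1}*, q_k*)}] − δ_k ℙ(q ∈ [q_{k+1}*, q_k*))); 𝔼[p_i(X)] = p̄_i + e_iᵀ Σ_{k=i}^n (Δ_k 𝔼[f(q)·1_{q ∈ [q_{k+1}*, q_k*)}] − δ_k ℙ(q ∈ [q_{k+1}*, q_k*))); and 𝔼[V_i(X)⁺] = e_iᵀ Σ_{k=0}^{i−1}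 (Δ_k 𝔼[f(q)·1_{q ∈ [q_{k+1}*, q_k*)}] − δ_k ℙ(q ∈ [q_{k+1}*, q_k*))). -/

import Mathlib

open Matrix BigOperators MeasureTheory

noncomputable section

/-- Total liabilities `p̄_i = Σ_{j=1}^{n+1} L_{ij}`. -/
def pbar {n : ℕ} (L : Matrix (Fin n) (Fin (n + 1)) ℝ) (i : Fin n) : ℝ :=
  ∑ j, L i j

/-- Relative liabilities `π_{ij} = L_{ij} / p̄_i` if `p̄_i > 0`, else `0`. -/
def relLiab {n : ℕ} (L : Matrix (Fin n) (Fin (n + 1)) ℝ) (i j : Fin n) : ℝ :=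
  if 0 < pbar L i then L i j.castSucc / pbar L i else 0

/-- The interbank relative liabilities matrix `Π`. -/
def PiMat {n : ℕ} (L : Matrix (Fin n) (Fin (n + 1)) ℝ) : Matrix (Fin n) (Fin n) ℝ :=
  Matrix.of fun i j => relLiab L i j

/-- The clearing map in wealths `Ψ_x`. -/
def Psi {n : ℕ} (L : Matrix (Fin n) (Fin (n + 1)) ℝ) (αx αL : ℝ)
    (x V : Fin n → ℝ) (i : Fin n) : ℝ :=
  if 0 ≤ V i then
    x i + ∑ j, relLiab L j i * max (pbar L j - max (-(V j)) 0) 0 - pbar L i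
  else
    αx * x i + αL * ∑ j, relLiab L j i * max (pbar L j - max (-(V j)) 0) 0 - pbar L i

/-- The default indicator vector `z⁽ᵏ⁾ = e_1 + ... + e_k`. -/
def zvec (n k : ℕ) : Fin n → ℝ := fun i => if (i : ℕ) < k then 1 else 0

/-- The matrix `I − (I − (1−α_L)Λ) Πᵀ Λ` where `Λ = diag(z)`. -/
def Amat {n : ℕ} (L : Matrix (Fin n) (Fin (n + 1)) ℝ) (αL : ℝ) (z : Fin n → ℝ) :
    Matrix (Fin n) (Fin n) ℝ :=
  1 - ((1 : Matrix (Fin n) (Fin n) ℝ) - (1 - αL) • Matrix.diagonal z)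
        * (PiMat L)ᵀ * Matrix.diagonal z

/-- `Δ_k = Δ(z⁽ᵏ⁾) = (I − (I − (1−α_L)Λ)Πᵀ Λ)⁻¹ (I − (1−α_x)Λ)`; for `k = 0` this is `I`. -/
def DeltaM {n : ℕ} (L : Matrix (Fin n) (Fin (n + 1)) ℝ) (αx αL : ℝ) (k : ℕ) :
    Matrix (Fin n) (Fin n) ℝ :=
  (Amat L αL (zvec n k))⁻¹
    * ((1 : Matrix (Fin n) (Fin n) ℝ) - (1 - αx) • Matrix.diagonal (zvec n k))

/-- `δ_k = δ(z⁽ᵏ⁾) = (I − (I − (1−α_L)Λ)Πᵀ Λ)⁻¹ (I − (I − (1−α_L)Λ)Πᵀ) p̄`;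
for `k = 0` this is `(I − Πᵀ) p̄`. -/
def deltaV {n : ℕ} (L : Matrix (Fin n) (Fin (n + 1)) ℝ) (αL : ℝ) (k : ℕ) :
    Fin n → ℝ :=
  (Amat L αL (zvec n k))⁻¹ *ᵥ
    ((((1 : Matrix (Fin n) (Fin n) ℝ)
        - ((1 : Matrix (Fin n) (Fin n) ℝ) - (1 - αL) • Matrix.diagonal (zvec n k))
            * (PiMat L)ᵀ)) *ᵥ pbar L)

/-- The event `{q ∈ [q_{k+1}*, q_k*)}` (with `q_0* = ∞` and `q_{n+1}* = 0`). -/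
def qEvent {Ω : Type} (q : Ω → ℝ) (qsE : ℕ → EReal) (k : ℕ) : Set Ω :=
  {ω | qsE (k + 1) ≤ (q ω : EReal) ∧ (q ω : EReal) < qsE k}

/-!
On the event `q ∈ [q_{k+1}*, q_k*)` the ordering of the thresholds says that exactly banks
`1, …, k` default. With the default set fixed, a defaulted bank pays `p̄_j + V_j`, so the clearing
equation becomes the affine system `(I − (I − (1−α_L)Λ)ΠᵀΛ) V = (I − (1−α_x)Λ) x − (I − (I −
(1−α_L)Λ)Πᵀ) p̄` with `Λ = diag z⁽ᵏ⁾`. Regularity makes its matrix strictly diagonally dominant by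
columns, hence invertible, and `V = Δ_k x − δ_k` there. The events partition `Ω`, so the
expectations split into sums over `k`; payments and equities only pick up the events on which
bank `i` defaults (`k > i`), respectively survives (`k ≤ i`).
-/

section Clearing

variable {n : ℕ} {L : Matrix (Fin n) (Fin (n + 1)) ℝ} {αx αL : ℝ}

lemma Matrix.one_sub_smul_diagonal {m R : Type*} [Fintype m] [DecidableEq m] [CommRing R]
    (c : R) (z : m → R) : (1 : Matrix m m R) - c • diagonal z = diagonal fun i => 1 - c * z i := by
  ext i j
  by_cases h : i = j <;> simp [h]

lemma pbar_nonneg (hL : ∀ i j, 0 ≤ L i j) (i : Fin n) : 0 ≤ pbar L i :=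
  Finset.sum_nonneg fun j _ => hL i j

lemma relLiab_nonneg (hL : ∀ i j, 0 ≤ L i j) (i j : Fin n) : 0 ≤ relLiab L i j := by
  unfold relLiab
  split_ifs with h
  · exact div_nonneg (hL _ _) h.le
  · exact le_rfl

lemma relLiab_self (hLdiag : ∀ i : Fin n, L i i.castSucc = 0) (i : Fin n) : relLiab L i i = 0 := by
  simp [relLiab, hLdiag]

lemma Amat_apply (z : Fin n → ℝ) (i j : Fin n) :
    Amat L αL z i j = (1 : Matrix (Fin n) (Fin n) ℝ) i j
      - (1 - (1 - αL) * z i) * relLiab L j i * z j := by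
  simp [Amat, Matrix.one_sub_smul_diagonal, PiMat]

lemma Amat_det_ne_zero (hL : ∀ i j, 0 ≤ L i j) (hLdiag : ∀ i : Fin n, L i i.castSucc = 0)
    (hαL : αL ∈ Set.Icc (0 : ℝ) 1) (hsum : ∀ i, ∑ j, relLiab L i j < 1)
    {z : Fin n → ℝ} (hz : ∀ i, z i ∈ Set.Icc (0 : ℝ) 1) : (Amat L αL z).det ≠ 0 := by
  refine det_ne_zero_of_sum_col_lt_diag fun j => ?_
  have hoff : ∀ i ∈ Finset.univ.erase j, ‖Amat L αL z i j‖ ≤ relLiab L j i := by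
    intro i hi
    have hπ := relLiab_nonneg hL j i
    have hc : 0 ≤ 1 - (1 - αL) * z i ∧ 1 - (1 - αL) * z i ≤ 1 := by
      constructor <;> nlinarith [hαL.1, hαL.2, (hz i).1, (hz i).2]
    rw [Amat_apply, one_apply_ne (Finset.ne_of_mem_erase hi), zero_sub, norm_neg,
      Real.norm_of_nonneg (mul_nonneg (mul_nonneg hc.1 hπ) (hz j).1)]
    have : (1 - (1 - αL) * z i) * z j ≤ 1 := by nlinarith [(hz j).1, (hz j).2]
    nlinarith
  calc ∑ i ∈ Finset.univ.erase j, ‖Amat L αL z i j‖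
      ≤ ∑ i ∈ Finset.univ.erase j, relLiab L j i := Finset.sum_le_sum hoff
    _ ≤ ∑ i, relLiab L j i :=
        Finset.sum_le_sum_of_subset_of_nonneg (Finset.erase_subset _ _)
          fun i _ _ => relLiab_nonneg hL j i
    _ < ‖Amat L αL z j j‖ := by simpa [Amat_apply, relLiab_self hLdiag] using hsum j

lemma max_sub_max_neg_eq {p v : ℝ} (hp : 0 ≤ p) (hv : -p ≤ v) :
    max (p - max (-v) 0) 0 = p + (if v < 0 then 1 else 0) * v := by
  split_ifs with h
  · rw [max_eq_left (neg_nonneg.2 h.le), sub_neg_eq_add, max_eq_left (by linarith)]; ring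
  · rw [max_eq_right (neg_nonpos.2 (not_lt.1 h)), sub_zero, max_eq_left hp]; ring

lemma max_zero_eq_ite {v : ℝ} {P : Prop} [Decidable P] (h : 0 ≤ v ↔ P) :
    max v 0 = if P then v else 0 := by
  split_ifs with hP
  · exact max_eq_left (h.2 hP)
  · exact max_eq_right (not_le.1 (mt h.1 hP)).le

lemma neg_max_neg_zero_eq_ite {v : ℝ} {P : Prop} [Decidable P] (h : v < 0 ↔ P) :
    -max (-v) 0 = if P then v else 0 := by
  split_ifs with hP
  · rw [max_eq_left (neg_nonneg.2 (h.2 hP).le), neg_neg]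
  · rw [max_eq_right (neg_nonpos.2 (not_lt.1 (mt h.1 hP))), neg_zero]

lemma neg_pbar_le_of_fixed (hL : ∀ i j, 0 ≤ L i j) (hαx : 0 ≤ αx) (hαL : 0 ≤ αL)
    {x V : Fin n → ℝ} (hx : ∀ i, 0 ≤ x i) (hV : Psi L αx αL x V = V) (i : Fin n) :
    -pbar L i ≤ V i := by
  have hin : 0 ≤ ∑ j, relLiab L j i * max (pbar L j - max (-(V j)) 0) 0 :=
    Finset.sum_nonneg fun j _ => mul_nonneg (relLiab_nonneg hL j i) (le_max_right _ _)
  rw [← hV, Psi]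
  split_ifs
  · linarith [hx i]
  · nlinarith [mul_nonneg hαx (hx i), mul_nonneg hαL hin]

lemma Amat_mulVec_eq_of_fixed (hL : ∀ i j, 0 ≤ L i j) (hαx : 0 ≤ αx) (hαL : 0 ≤ αL)
    {x V : Fin n → ℝ} (hx : ∀ i, 0 ≤ x i) (hV : Psi L αx αL x V = V)
    {z : Fin n → ℝ} (hz : ∀ i, z i = if V i < 0 then 1 else 0) :
    Amat L αL z *ᵥ V = (1 - (1 - αx) • diagonal z) *ᵥ x
      - (1 - (1 - (1 - αL) • diagonal z) * (PiMat L)ᵀ) *ᵥ pbar L := by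
  set D := 1 - (1 - αL) • diagonal z
  set Dx := 1 - (1 - αx) • diagonal z
  have hfixed : V = Dx *ᵥ x
      + D *ᵥ ((PiMat L)ᵀ *ᵥ (pbar L + diagonal z *ᵥ V)) - pbar L := by
    ext i
    have hpay : ∀ j, max (pbar L j - max (-(V j)) 0) 0 = pbar L j + z j * V j := fun j => by
      rw [hz, max_sub_max_neg_eq (pbar_nonneg hL j) (neg_pbar_le_of_fixed hL hαx hαL hx hV j)]
    conv_lhs => rw [← hV]
    simp only [Psi, hpay, D, Dx, Matrix.one_sub_smul_diagonal, mulVec_diagonal, mulVec_transpose,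
      vecMul, dotProduct, PiMat, of_apply, Pi.add_apply, Pi.sub_apply, hz i]
    by_cases h : V i < 0
    · simp [h, h.not_ge, mul_comm]
    · simp [h, not_lt.1 h, mul_comm]
  have hA : Amat L αL z = 1 - D * (PiMat L)ᵀ * diagonal z := rfl
  clear_value D Dx
  rw [hA, sub_mulVec, sub_mulVec, one_mulVec, one_mulVec, ← mulVec_mulVec, ← mulVec_mulVec,
    ← mulVec_mulVec]
  nth_rewrite 1 [hfixed]
  rw [mulVec_add, mulVec_add]
  abel

lemma zvec_mem_Icc (n k : ℕ) (i : Fin n) : zvec n k i ∈ Set.Icc (0 : ℝ) 1 := by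
  unfold zvec; split_ifs <;> simp

lemma eq_DeltaM_mulVec_sub_deltaV_of_fixed (hL : ∀ i j, 0 ≤ L i j)
    (hLdiag : ∀ i : Fin n, L i i.castSucc = 0) (hαx : 0 ≤ αx) (hαL : αL ∈ Set.Icc (0 : ℝ) 1)
    (hsum : ∀ i, ∑ j, relLiab L i j < 1) {x V : Fin n → ℝ} (hx : ∀ i, 0 ≤ x i)
    (hV : Psi L αx αL x V = V) {k : ℕ} (hdef : ∀ i : Fin n, V i < 0 ↔ (i : ℕ) < k) :
    V = DeltaM L αx αL k *ᵥ x - deltaV L αL k := by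
  have hz : ∀ i, zvec n k i = if V i < 0 then 1 else 0 := fun i => by simp [zvec, hdef]
  have hdet := Amat_det_ne_zero hL hLdiag hαL hsum (zvec_mem_Icc n k)
  rw [DeltaM, deltaV, ← mulVec_mulVec, ← mulVec_sub,
    ← Amat_mulVec_eq_of_fixed hL hαx hαL.1 hx hV hz, mulVec_mulVec,
    nonsing_inv_mul _ (isUnit_iff_ne_zero.2 hdet), one_mulVec]

end Clearing

section Partition

lemma antitoneOn_Iic_of_succ_le {α : Type*} [Preorder α] {s : ℕ → α} {n : ℕ}
    (hs : ∀ k ≤ n, s (k + 1) ≤ s k) : AntitoneOn s (Set.Iic (n + 1)) := by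
  intro a _ b hb hab
  induction b, hab using Nat.le_induction with
  | base => exact le_rfl
  | succ b _ ih =>
    rw [Set.mem_Iic] at hb
    exact (hs b (by omega)).trans (ih (by rw [Set.mem_Iic]; omega))

lemma exists_succ_le_and_lt {α : Type*} [LinearOrder α] {s : ℕ → α} {n : ℕ} {t : α}
    (h0 : t < s 0) (hn : s (n + 1) ≤ t) : ∃ k ≤ n, s (k + 1) ≤ t ∧ t < s k := by
  induction n with
  | zero => exact ⟨0, le_rfl, hn, h0⟩
  | succ n ih =>
    by_cases h : s (n + 1) ≤ t
    · obtain ⟨k, hk, hkt⟩ := ih h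
      exact ⟨k, hk.trans n.le_succ, hkt⟩
    · exact ⟨n + 1, le_rfl, hn, not_le.1 h⟩

lemma lt_succ_iff_of_succ_le_of_lt {α : Type*} [LinearOrder α] {s : ℕ → α} {n k i : ℕ} {t : α}
    (hs : ∀ m ≤ n, s (m + 1) ≤ s m) (hk : k ≤ n) (ht : s (k + 1) ≤ t ∧ t < s k) (hi : i ≤ n) :
    t < s (i + 1) ↔ i < k := by
  have anti := antitoneOn_Iic_of_succ_le hs
  constructor
  · intro h
    by_contra! hki
    exact (anti (Set.mem_Iic.2 (by omega)) (Set.mem_Iic.2 (by omega)) (by omega)).trans ht.1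
      |>.not_gt h
  · intro h
    exact ht.2.trans_le (anti (Set.mem_Iic.2 (by omega)) (Set.mem_Iic.2 (by omega)) h)

variable {Ω : Type} {q : Ω → ℝ} {qsE : ℕ → EReal} {n : ℕ}

lemma measurableSet_qEvent [MeasurableSpace Ω] (hq : Measurable q) (k : ℕ) :
    MeasurableSet (qEvent q qsE k) :=
  (measurable_coe_real_ereal.comp hq) measurableSet_Ico

lemma exists_mem_qEvent (hqpos : ∀ ω, 0 ≤ q ω) (hqs0 : qsE 0 = ⊤) (hqslast : qsE (n + 1) = 0)
    (ω : Ω) : ∃ k ≤ n, ω ∈ qEvent q qsE k :=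
  exists_succ_le_and_lt (by rw [hqs0]; exact EReal.coe_lt_top _)
    (by rw [hqslast]; exact_mod_cast hqpos ω)

lemma pairwiseDisjoint_qEvent (hqsmono : ∀ k ≤ n, qsE (k + 1) ≤ qsE k) :
    (Finset.range (n + 1) : Set ℕ).PairwiseDisjoint (qEvent q qsE) := by
  intro k hk l hl hkl
  simp only [Finset.coe_range, Set.mem_Iio] at hk hl
  refine Set.disjoint_left.2 fun ω hωk hωl => hkl ?_
  have hlk : ¬l < k := fun h =>
    hωl.1.not_gt ((lt_succ_iff_of_succ_le_of_lt hqsmono (by omega) hωk (by omega)).2 h)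
  have hkl : ¬k < l := fun h =>
    hωk.1.not_gt ((lt_succ_iff_of_succ_le_of_lt hqsmono (by omega) hωl (by omega)).2 h)
  omega

end Partition

section Piecewise

variable {Ω ι G : Type*} [DecidableEq ι] {T S : Finset ι} {E : ι → Set Ω} {F : Ω → G}
  {g : ι → Ω → G}

lemma eq_sum_indicator_of_piecewise [AddCommMonoid G] (hdisj : (T : Set ι).PairwiseDisjoint E)
    (hcover : ∀ ω, ∃ k ∈ T, ω ∈ E k) (hST : S ⊆ T)
    (hF : ∀ k ∈ T, ∀ ω ∈ E k, F ω = if k ∈ S then g k ω else 0) :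
    F = fun ω => ∑ k ∈ S, (E k).indicator (g k) ω := by
  ext ω
  have hgF : ∑ k ∈ S, (E k).indicator (g k) ω = ∑ k ∈ S, (E k).indicator F ω :=
    Finset.sum_congr rfl fun k hk =>
      congrFun (Set.indicator_congr fun ω hω => by rw [hF k (hST hk) ω hω, if_pos hk]) ω
  rw [hgF, ← Finset.indicator_biUnion_apply S E (hdisj.subset (Finset.coe_subset.2 hST))]
  obtain ⟨k, hkT, hk⟩ := hcover ω
  by_cases hkS : k ∈ S
  · rw [Set.indicator_of_mem (Set.mem_iUnion₂.2 ⟨k, hkS, hk⟩)]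
  · have h0 : F ω = 0 := by rw [hF k hkT ω hk, if_neg hkS]
    rw [h0, Set.indicator_apply_eq_zero.2 fun _ => h0]

lemma integral_eq_sum_setIntegral_of_piecewise [MeasurableSpace Ω] {μ : Measure Ω}
    [NormedAddCommGroup G] [NormedSpace ℝ G] (hE : ∀ k ∈ S, MeasurableSet (E k))
    (hdisj : (T : Set ι).PairwiseDisjoint E) (hcover : ∀ ω, ∃ k ∈ T, ω ∈ E k) (hST : S ⊆ T)
    (hg : ∀ k ∈ S, IntegrableOn (g k) (E k) μ)
    (hF : ∀ k ∈ T, ∀ ω ∈ E k, F ω = if k ∈ S then g k ω else 0) :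
    Integrable F μ ∧ ∫ ω, F ω ∂μ = ∑ k ∈ S, ∫ ω in E k, g k ω ∂μ := by
  have hint : ∀ k ∈ S, Integrable ((E k).indicator (g k)) μ := fun k hk =>
    (integrable_indicator_iff (hE k hk)).2 (hg k hk)
  rw [eq_sum_indicator_of_piecewise hdisj hcover hST hF]
  refine ⟨integrable_finsetSum S hint, ?_⟩
  rw [integral_finsetSum S hint]
  exact Finset.sum_congr rfl fun k hk => integral_indicator (hE k hk)

end Piecewise

lemma setIntegral_sum_mul_sub_const {Ω ι : Type*} [MeasurableSpace Ω] {μ : Measure Ω}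
    [IsFiniteMeasure μ] [Fintype ι] {s : Set Ω} (a : ι → ℝ) (c : ℝ) {h : ι → Ω → ℝ}
    (hh : ∀ j, IntegrableOn (h j) s μ) :
    ∫ ω in s, (∑ j, a j * h j ω - c) ∂μ = ∑ j, a j * ∫ ω in s, h j ω ∂μ - c * (μ s).toReal := by
  rw [integral_sub (integrable_finsetSum _ fun j _ => (hh j).const_mul _) (integrable_const c),
    integral_finsetSum _ fun j _ => (hh j).const_mul _, setIntegral_const, smul_eq_mul, mul_comm]
  simp_rw [integral_const_mul]
  rfl

lemma integral_eq_sum_qEvent {Ω : Type} [MeasurableSpace Ω] {μ : Measure Ω} [IsFiniteMeasure μ]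
    {q : Ω → ℝ} {qsE : ℕ → EReal} {n : ℕ} (hq : Measurable q) (hqpos : ∀ ω, 0 ≤ q ω)
    (hqs0 : qsE 0 = ⊤) (hqslast : qsE (n + 1) = 0) (hqsmono : ∀ k ≤ n, qsE (k + 1) ≤ qsE k)
    {ι : Type*} [Fintype ι] {h : ι → Ω → ℝ} (hh : ∀ j, Integrable (h j) μ)
    (a : ℕ → ι → ℝ) (c : ℕ → ℝ) {S : Finset ℕ} (hS : S ⊆ Finset.range (n + 1)) {F : Ω → ℝ}
    (hF : ∀ k ≤ n, ∀ ω ∈ qEvent q qsE k,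
      F ω = if k ∈ S then ∑ j, a k j * h j ω - c k else 0) :
    Integrable F μ ∧ ∫ ω, F ω ∂μ = ∑ k ∈ S,
      (∑ j, a k j * ∫ ω in qEvent q qsE k, h j ω ∂μ - c k * (μ (qEvent q qsE k)).toReal) := by
  have hcover : ∀ ω, ∃ k ∈ Finset.range (n + 1), ω ∈ qEvent q qsE k := fun ω => by
    obtain ⟨k, hk, hω⟩ := exists_mem_qEvent hqpos hqs0 hqslast ω
    exact ⟨k, Finset.mem_range.2 (Nat.lt_succ_of_le hk), hω⟩
  have hg : ∀ k, Integrable (fun ω => ∑ j, a k j * h j ω - c k) μ := fun k =>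
    (integrable_finsetSum _ fun j _ => (hh j).const_mul _).sub (integrable_const _)
  obtain ⟨hint, heq⟩ := integral_eq_sum_setIntegral_of_piecewise (μ := μ)
    (fun k _ => measurableSet_qEvent hq k) (pairwiseDisjoint_qEvent hqsmono) hcover hS
    (fun k _ => (hg k).integrableOn)
    (fun k hk => hF k (Nat.le_of_lt_succ (Finset.mem_range.1 hk)))
  exact ⟨hint, heq.trans (Finset.sum_congr rfl fun k _ =>
    setIntegral_sum_mul_sub_const _ _ fun j => (hh j).integrableOn)⟩

theorem expectations_comonotonic_general (n : ℕ)
    (L : Matrix (Fin n) (Fin (n + 1)) ℝ)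
    (hL : ∀ i j, 0 ≤ L i j) (hLdiag : ∀ i : Fin n, L i i.castSucc = 0)
    (αx αL : ℝ) (hαx : αx ∈ Set.Icc (0 : ℝ) 1) (hαL : αL ∈ Set.Icc (0 : ℝ) 1)
    (hreg : ∀ i, 0 < pbar L i ∧ ∑ j, relLiab L i j < 1)
    (Vmap : (Fin n → ℝ) → (Fin n → ℝ))
    (hV : ∀ x : Fin n → ℝ, (∀ i, 0 ≤ x i) →
      IsGreatest {V | Psi L αx αL x V = V} (Vmap x))
    (Ω : Type) (mΩ : MeasurableSpace Ω) (ℙ : Measure Ω) (hprob : IsProbabilityMeasure ℙ)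
    (q : Ω → ℝ) (hqm : Measurable q) (hqpos : ∀ ω, 0 ≤ q ω)
    (f : ℝ → Fin n → ℝ)
    (hfpos : ∀ u : ℝ, 0 ≤ u → ∀ i, 0 ≤ f u i)
    (hfint : ∀ i, Integrable (fun ω => f (q ω) i) ℙ)
    (qsE : ℕ → EReal)
    (hqs0 : qsE 0 = ⊤) (hqslast : qsE (n + 1) = 0)
    (hqsmono : ∀ k, k ≤ n → qsE (k + 1) ≤ qsE k)
    (hchar : ∀ i : Fin n, ∀ q' : ℝ, 0 ≤ q' →
      (Vmap (f q') i < 0 ↔ ((q' : EReal) < qsE ((i : ℕ) + 1)))) :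
    ∀ i : Fin n,
      (∫ ω, Vmap (f (q ω)) i ∂ℙ
        = ∑ k ∈ Finset.range (n + 1),
            ((∑ j, DeltaM L αx αL k i j * ∫ ω in qEvent q qsE k, f (q ω) j ∂ℙ)
              - deltaV L αL k i * (ℙ (qEvent q qsE k)).toReal))
      ∧ (∫ ω, (pbar L i - max (-(Vmap (f (q ω)) i)) 0) ∂ℙ
        = pbar L i + ∑ k ∈ Finset.Icc ((i : ℕ) + 1) n,
            ((∑ j, DeltaM L αx αL k i j * ∫ ω in qEvent q qsE k, f (q ω) j ∂ℙ)
              - deltaV L αL k i * (ℙ (qEvent q qsE k)).toReal))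
      ∧ (∫ ω, max (Vmap (f (q ω)) i) 0 ∂ℙ
        = ∑ k ∈ Finset.range ((i : ℕ) + 1),
            ((∑ j, DeltaM L αx αL k i j * ∫ ω in qEvent q qsE k, f (q ω) j ∂ℙ)
              - deltaV L αL k i * (ℙ (qEvent q qsE k)).toReal)) := by
  intro i
  have hbank : ∀ k ≤ n, ∀ ω ∈ qEvent q qsE k, (Vmap (f (q ω)) i < 0 ↔ (i : ℕ) < k) ∧
      Vmap (f (q ω)) i = ∑ j, DeltaM L αx αL k i j * f (q ω) j - deltaV L αL k i := by
    intro k hk ω hω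
    have hx := hfpos (q ω) (hqpos ω)
    have hdef : ∀ i' : Fin n, Vmap (f (q ω)) i' < 0 ↔ (i' : ℕ) < k := fun i' =>
      (hchar i' _ (hqpos ω)).trans (lt_succ_iff_of_succ_le_of_lt hqsmono hk hω i'.is_lt.le)
    exact ⟨hdef i, congrFun (eq_DeltaM_mulVec_sub_deltaV_of_fixed hL hLdiag hαx.1 hαL
      (fun i => (hreg i).2) hx (hV _ hx).1 hdef) i⟩
  have hpiece := fun S hS F hF => integral_eq_sum_qEvent (μ := ℙ) hqm hqpos hqs0 hqslast hqsmono
    hfint (fun k j => DeltaM L αx αL k i j) (fun k => deltaV L αL k i) (S := S) hS (F := F) hF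
  have hloss := hpiece (Finset.Icc ((i : ℕ) + 1) n) (fun k hk => by simp at hk ⊢; omega)
    (fun ω => -max (-(Vmap (f (q ω)) i)) 0) fun k hk ω hω => by
      obtain ⟨hdef, hval⟩ := hbank k hk ω hω
      rw [neg_max_neg_zero_eq_ite (P := k ∈ Finset.Icc ((i : ℕ) + 1) n)
        (hdef.trans (by simp; omega)), hval]
  refine ⟨(hpiece _ subset_rfl _ fun k hk ω hω => ?_).2, ?_,
    (hpiece _ (Finset.range_subset_range.2 (by omega)) _ fun k hk ω hω => ?_).2⟩
  · rw [if_pos (Finset.mem_range.2 (by omega))]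
    exact (hbank k hk ω hω).2
  · simp only [sub_eq_add_neg (pbar L i)]
    rw [integral_add (integrable_const _) hloss.1, hloss.2, integral_const, probReal_univ,
      one_smul]
  · obtain ⟨hdef, hval⟩ := hbank k hk ω hω
    rw [max_zero_eq_ite (P := k ∈ Finset.range ((i : ℕ) + 1))
      ((not_lt.symm.trans (not_congr hdef)).trans (by simp)), hval]

/-- Under the regularity assumption with comonotonic endowments `X = f(q)` and ordered solvency
thresholds `∞ = q_0* ≥ q_1* ≥ ... ≥ q_n* ≥ q_{n+1}* = 0`, the expected wealth, expected
payment, and expected equity of each bank `i` are given by partial sums of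
`Δ_k 𝔼[f(q) 1_{q ∈ [q_{k+1}*, q_k*)}] − δ_k ℙ(q ∈ [q_{k+1}*, q_k*))`. -/
theorem expectations_comonotonic (n : ℕ) (hn : 1 ≤ n)
    (L : Matrix (Fin n) (Fin (n + 1)) ℝ)
    (hL : ∀ i j, 0 ≤ L i j) (hLdiag : ∀ i : Fin n, L i i.castSucc = 0)
    (αx αL : ℝ) (hαx : αx ∈ Set.Icc (0 : ℝ) 1) (hαL : αL ∈ Set.Icc (0 : ℝ) 1)
    (hreg : ∀ i, 0 < pbar L i ∧ ∑ j, relLiab L i j < 1)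
    (Vmap : (Fin n → ℝ) → (Fin n → ℝ))
    (hV : ∀ x : Fin n → ℝ, (∀ i, 0 ≤ x i) →
      IsGreatest {V | Psi L αx αL x V = V} (Vmap x))
    (Ω : Type) (mΩ : MeasurableSpace Ω) (ℙ : Measure Ω) (hprob : IsProbabilityMeasure ℙ)
    (q : Ω → ℝ) (hqm : Measurable q) (hqpos : ∀ ω, 0 ≤ q ω)
    (f : ℝ → Fin n → ℝ)
    (hfmono : ∀ u v : ℝ, 0 ≤ u → u ≤ v → f u ≤ f v)
    (hfpos : ∀ u : ℝ, 0 ≤ u → ∀ i, 0 ≤ f u i)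
    (hfint : ∀ i, Integrable (fun ω => f (q ω) i) ℙ)
    (qstar : Fin n → ℝ)
    (hqstar : ∀ i, qstar i = sInf {q' : ℝ | 0 ≤ q' ∧ 0 ≤ Vmap (f q') i})
    (qsE : ℕ → EReal)
    (hqs0 : qsE 0 = ⊤) (hqslast : qsE (n + 1) = 0)
    (hqsval : ∀ i : Fin n, qsE ((i : ℕ) + 1) = ((qstar i : ℝ) : EReal))
    (hqsmono : ∀ k, k ≤ n → qsE (k + 1) ≤ qsE k)
    (hchar : ∀ i : Fin n, ∀ q' : ℝ, 0 ≤ q' →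
      (Vmap (f q') i < 0 ↔ ((q' : EReal) < qsE ((i : ℕ) + 1)))) :
    ∀ i : Fin n,
      (∫ ω, Vmap (f (q ω)) i ∂ℙ
        = ∑ k ∈ Finset.range (n + 1),
            ((∑ j, DeltaM L αx αL k i j * ∫ ω in qEvent q qsE k, f (q ω) j ∂ℙ)
              - deltaV L αL k i * (ℙ (qEvent q qsE k)).toReal))
      ∧ (∫ ω, (pbar L i - max (-(Vmap (f (q ω)) i)) 0) ∂ℙ
        = pbar L i + ∑ k ∈ Finset.Icc ((i : ℕ) + 1) n,
            ((∑ j, DeltaM L αx αL k i j * ∫ ω in qEvent q qsE k, f (q ω) j ∂ℙ)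
              - deltaV L αL k i * (ℙ (qEvent q qsE k)).toReal))
      ∧ (∫ ω, max (Vmap (f (q ω)) i) 0 ∂ℙ
        = ∑ k ∈ Finset.range ((i : ℕ) + 1),
            ((∑ j, DeltaM L αx αL k i j * ∫ ω in qEvent q qsE k, f (q ω) j ∂ℙ)
              - deltaV L αL k i * (ℙ (qEvent q qsE k)).toReal)) :=
  expectations_comonotonic_general n L hL hLdiag αx αL hαx hαL hreg Vmap hV Ω mΩ ℙ hprob q hqm hqpos
    f hfpos hfint qsE hqs0 hqslast hqsmono hchar
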